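/- arXiv:2510.27403 — 2 statements merged into one kernel-verified Lean document; each statement's English description precedes it below -/
import Mathlib

section
/- Let f be L-smooth, and let a_r = E[‖∇f(x^r)‖²] and suppose E[‖x^r − x^{r−1}‖²] ≤ 2γ²(E_{r−1} + a_{r−1}) where E_{r−1} ≥ 0. Then for any q > 0, E[‖∇f_i(x^r)‖²] ≤ (1+q) E[‖∇f_i(x^{r−1})‖²] + 2(1 + q^{−1}) γ² L² (E_{r−1} + a_{r−1}), and unrolling with q = 1/r gives E[‖∇f_i(x^r)‖²] ≤ e·E[‖∇f_i(x^0)‖²] + 2e(r+1)γ²L² ∑_{j=0}^{r−1} (E_j + a_j). -/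
/-- Gradient-growth recursion: if `∇f_i` is `L`-Lipschitz and the global iterates satisfy
`‖x^r − x^{r−1}‖² ≤ 2γ²(E_{r−1} + a_{r−1})`, then for any `q > 0`,
`‖∇f_i(x^r)‖² ≤ (1+q)‖∇f_i(x^{r−1})‖² + 2(1+q⁻¹)γ²L²(E_{r−1}+a_{r−1})`, and unrolling
(with `q = 1/r`) gives `‖∇f_i(x^r)‖² ≤ e‖∇f_i(x^0)‖² + 2e(r+1)γ²L²∑_{j<r}(E_j + a_j)`. -/
theorem stmt_14 {d : ℕ}
    (gradi : EuclideanSpace ℝ (Fin d) → EuclideanSpace ℝ (Fin d))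
    (L γ : ℝ) (hL : 0 ≤ L) (hγ : 0 ≤ γ)
    (hLip : ∀ u v, ‖gradi u - gradi v‖ ≤ L * ‖u - v‖)
    (x : ℕ → EuclideanSpace ℝ (Fin d))
    (Err a : ℕ → ℝ)
    (hErr : ∀ j, 0 ≤ Err j) (ha : ∀ j, 0 ≤ a j)
    (hdisp : ∀ r, 1 ≤ r → ‖x r - x (r - 1)‖ ^ 2 ≤ 2 * γ ^ 2 * (Err (r - 1) + a (r - 1))) :
    (∀ q : ℝ, 0 < q → ∀ r, 1 ≤ r →
      ‖gradi (x r)‖ ^ 2 ≤ (1 + q) * ‖gradi (x (r - 1))‖ ^ 2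
        + 2 * (1 + q⁻¹) * γ ^ 2 * L ^ 2 * (Err (r - 1) + a (r - 1))) ∧
    (∀ r : ℕ,
      ‖gradi (x r)‖ ^ 2 ≤ Real.exp 1 * ‖gradi (x 0)‖ ^ 2
        + 2 * Real.exp 1 * ((r : ℝ) + 1) * γ ^ 2 * L ^ 2
            * ∑ j ∈ Finset.range r, (Err j + a j)) := by
  have young : ∀ (u v : EuclideanSpace ℝ (Fin d)) (q : ℝ), 0 < q →
      ‖u + v‖ ^ 2 ≤ (1 + q) * ‖u‖ ^ 2 + (1 + q⁻¹) * ‖v‖ ^ 2 := by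
    intro u v q hq
    have h1 : ‖u + v‖ ≤ ‖u‖ + ‖v‖ := norm_add_le u v
    have h2 : ‖u + v‖ ^ 2 ≤ (‖u‖ + ‖v‖) ^ 2 :=
      pow_le_pow_left₀ (norm_nonneg _) h1 2
    have hinv : q * q⁻¹ = 1 := mul_inv_cancel₀ hq.ne'
    nlinarith [sq_nonneg (q * ‖u‖ - ‖v‖), norm_nonneg u, norm_nonneg v, hq.le,
      mul_pos hq (inv_pos.mpr hq)]
  have part1 : ∀ q : ℝ, 0 < q → ∀ r, 1 ≤ r →
      ‖gradi (x r)‖ ^ 2 ≤ (1 + q) * ‖gradi (x (r - 1))‖ ^ 2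
        + 2 * (1 + q⁻¹) * γ ^ 2 * L ^ 2 * (Err (r - 1) + a (r - 1)) := by
    intro q hq r hr
    have hx := hdisp r hr
    have key : gradi (x r) = gradi (x (r - 1)) + (gradi (x r) - gradi (x (r - 1))) := by
      abel
    have hY := young (gradi (x (r - 1))) (gradi (x r) - gradi (x (r - 1))) q hq
    rw [← key] at hY
    have hd : ‖gradi (x r) - gradi (x (r - 1))‖ ≤ L * ‖x r - x (r - 1)‖ := hLip _ _
    have hd2 : ‖gradi (x r) - gradi (x (r - 1))‖ ^ 2 ≤ L ^ 2 * ‖x r - x (r - 1)‖ ^ 2 := by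
      have := pow_le_pow_left₀ (norm_nonneg _) hd 2
      nlinarith
    have hq' : 0 ≤ 1 + q⁻¹ := by positivity
    have h3 : ‖x r - x (r - 1)‖ ^ 2 ≤ 2 * γ ^ 2 * (Err (r - 1) + a (r - 1)) := hx
    nlinarith [mul_le_mul_of_nonneg_left hd2 hq',
      mul_le_mul_of_nonneg_left h3 (mul_nonneg hq' (sq_nonneg L))]
  refine ⟨part1, ?_⟩
  intro r
  have he1 : (1 : ℝ) ≤ Real.exp 1 := by
    have := Real.add_one_le_exp (1 : ℝ); linarith
  rcases Nat.eq_zero_or_pos r with h0 | hr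
  · subst h0
    simp only [Finset.range_zero, Finset.sum_empty, mul_zero, add_zero, Nat.cast_zero]
    nlinarith [sq_nonneg ‖gradi (x 0)‖]
  · have hrR : (1 : ℝ) ≤ (r : ℝ) := by exact_mod_cast hr
    set q : ℝ := (r : ℝ)⁻¹ with hqdef
    have hqpos : 0 < q := by positivity
    set C : ℝ := 2 * (1 + (r : ℝ)) * γ ^ 2 * L ^ 2 with hCdef
    have hC : 0 ≤ C := by positivity
    have claim : ∀ k : ℕ, ‖gradi (x k)‖ ^ 2 ≤
        (1 + q) ^ k * (‖gradi (x 0)‖ ^ 2 + C * ∑ j ∈ Finset.range k, (Err j + a j)) := by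
      intro k
      induction k with
      | zero => simp
      | succ k ih =>
        have hstep := part1 q hqpos (k + 1) (by omega)
        simp only [Nat.add_sub_cancel] at hstep
        have hqinv : q⁻¹ = (r : ℝ) := by rw [hqdef, inv_inv]
        rw [hqinv] at hstep
        have hone : (1 : ℝ) ≤ (1 + q) ^ (k + 1) := one_le_pow₀ (by linarith)
        have hEa : 0 ≤ Err k + a k := add_nonneg (hErr k) (ha k)
        have hS : 0 ≤ ∑ j ∈ Finset.range k, (Err j + a j) :=
          Finset.sum_nonneg fun j _ => add_nonneg (hErr j) (ha j)
        have hb0 : 0 ≤ ‖gradi (x 0)‖ ^ 2 := sq_nonneg _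
        have hCE : 2 * (1 + (r : ℝ)) * γ ^ 2 * L ^ 2 * (Err k + a k) = C * (Err k + a k) := by
          rw [hCdef]
        rw [Finset.sum_range_succ]
        have h1q : (0:ℝ) < 1 + q := by linarith
        have hmul := mul_le_mul_of_nonneg_left ih h1q.le
        have hCle : C * (Err k + a k) ≤ (1 + q) ^ (k + 1) * (C * (Err k + a k)) := by
          nlinarith [mul_nonneg hC hEa]
        calc ‖gradi (x (k + 1))‖ ^ 2
            ≤ (1 + q) * ‖gradi (x k)‖ ^ 2 + C * (Err k + a k) := by
              rw [← hCE]; exact hstep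
          _ ≤ (1 + q) * ((1 + q) ^ k * (‖gradi (x 0)‖ ^ 2 + C * ∑ j ∈ Finset.range k, (Err j + a j)))
              + (1 + q) ^ (k + 1) * (C * (Err k + a k)) := by linarith
          _ = (1 + q) ^ (k + 1) * (‖gradi (x 0)‖ ^ 2 +
              C * (∑ j ∈ Finset.range k, (Err j + a j) + (Err k + a k))) := by ring
    have hkey := claim r
    have hpow : (1 + q) ^ r ≤ Real.exp 1 := by
      have h1 : 1 + q ≤ Real.exp q := by
        have := Real.add_one_le_exp q; linarith
      have h2 : (1 + q) ^ r ≤ Real.exp q ^ r :=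
        pow_le_pow_left₀ (by linarith [hqpos.le]) h1 r
      have h3 : Real.exp q ^ r = Real.exp ((r : ℝ) * q) := by
        rw [← Real.exp_nat_mul]
      have h4 : (r : ℝ) * q = 1 := by
        rw [hqdef]; field_simp
      rw [h3, h4] at h2
      exact h2
    have hS : 0 ≤ ∑ j ∈ Finset.range r, (Err j + a j) :=
      Finset.sum_nonneg fun j _ => add_nonneg (hErr j) (ha j)
    have hb0 : 0 ≤ ‖gradi (x 0)‖ ^ 2 := sq_nonneg _
    have hpos : 0 ≤ ‖gradi (x 0)‖ ^ 2 + C * ∑ j ∈ Finset.range r, (Err j + a j) := by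
      positivity
    have : (1 + q) ^ r * (‖gradi (x 0)‖ ^ 2 + C * ∑ j ∈ Finset.range r, (Err j + a j))
        ≤ Real.exp 1 * (‖gradi (x 0)‖ ^ 2 + C * ∑ j ∈ Finset.range r, (Err j + a j)) :=
      mul_le_mul_of_nonneg_right hpow hpos
    have hfin : Real.exp 1 * (‖gradi (x 0)‖ ^ 2 + C * ∑ j ∈ Finset.range r, (Err j + a j))
        = Real.exp 1 * ‖gradi (x 0)‖ ^ 2
          + 2 * Real.exp 1 * ((r : ℝ) + 1) * γ ^ 2 * L ^ 2
            * ∑ j ∈ Finset.range r, (Err j + a j) := by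
      rw [hCdef]; ring
    linarith
end

section
/- Under L-smoothness of each f_i and unbiased stochastic gradients with variance σ_l², the averaged orthogonalized update satisfies E‖∇f(x^r) − (1/(SK))∑_{i∈S^r}∑_{k=1}^K U_i^{r,k} (V_i^{r,k})ᵀ‖² ≤ 2L²U_r + 2σ_l²/(SK) + 2(1−σ)²d, where U_r bounds the average squared client drift, and σ is a uniform lower bound on the singular values of the normalized momentum matrices (so each diagonal scaling S_i^{r,k} satisfies ‖I − S_i^{r,k}‖_F² ≤ (1−σ)²d). -/
open MeasureTheory Matrix

/-- Squared Frobenius norm of a square real matrix. -/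
def frobSq {d : ℕ} (A : Matrix (Fin d) (Fin d) ℝ) : ℝ := ∑ i, ∑ j, (A i j) ^ 2

/-- The product measurable structure on `d × d` real matrices. -/
instance matMeasurableSpace {d : ℕ} : MeasurableSpace (Matrix (Fin d) (Fin d) ℝ) :=
  MeasurableSpace.pi

lemma frobSq_nonneg {d : ℕ} (A : Matrix (Fin d) (Fin d) ℝ) : 0 ≤ frobSq A :=
  Finset.sum_nonneg fun _ _ => Finset.sum_nonneg fun _ _ => sq_nonneg _

lemma frobSq_sub_comm {d : ℕ} (A B : Matrix (Fin d) (Fin d) ℝ) :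
    frobSq (A - B) = frobSq (B - A) := by
  unfold frobSq
  refine Finset.sum_congr rfl fun i _ => Finset.sum_congr rfl fun j _ => ?_
  simp only [Matrix.sub_apply]; ring

lemma frobSq_add_le {d : ℕ} (A B : Matrix (Fin d) (Fin d) ℝ) :
    frobSq (A + B) ≤ 2 * frobSq A + 2 * frobSq B := by
  unfold frobSq
  have h : ∀ i j, (((A + B) i j) ^ 2 : ℝ) ≤ 2 * (A i j) ^ 2 + 2 * (B i j) ^ 2 := by
    intro i j
    have := sq_nonneg (A i j - B i j)
    simp only [Matrix.add_apply]
    nlinarith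
  calc (∑ i, ∑ j, ((A + B) i j) ^ 2)
      ≤ ∑ i, ∑ j, (2 * (A i j) ^ 2 + 2 * (B i j) ^ 2) :=
        Finset.sum_le_sum fun i _ => Finset.sum_le_sum fun j _ => h i j
    _ = 2 * (∑ i, ∑ j, (A i j) ^ 2) + 2 * (∑ i, ∑ j, (B i j) ^ 2) := by
        simp [Finset.sum_add_distrib, Finset.mul_sum]

lemma frobSq_smul {d : ℕ} (c : ℝ) (A : Matrix (Fin d) (Fin d) ℝ) :
    frobSq (c • A) = c ^ 2 * frobSq A := by
  unfold frobSq
  simp [Matrix.smul_apply, smul_eq_mul, mul_pow, Finset.mul_sum]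

lemma frobSq_sum_le {d : ℕ} {ι : Type*} [Fintype ι] (M : ι → Matrix (Fin d) (Fin d) ℝ) :
    frobSq (∑ p, M p) ≤ (Fintype.card ι : ℝ) * ∑ p, frobSq (M p) := by
  unfold frobSq
  have h : ∀ i j, (((∑ p, M p) i j) ^ 2 : ℝ) ≤ (Fintype.card ι : ℝ) * ∑ p, (M p i j) ^ 2 := by
    intro i j
    have h1 : (∑ p, M p) i j = ∑ p, M p i j := by rw [Matrix.sum_apply]
    rw [h1]
    exact sq_sum_le_card_mul_sum_sq (s := (Finset.univ : Finset ι)) (f := fun p => M p i j)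
  calc (∑ i, ∑ j, ((∑ p, M p) i j) ^ 2)
      ≤ ∑ i, ∑ j, (Fintype.card ι : ℝ) * ∑ p, (M p i j) ^ 2 :=
        Finset.sum_le_sum fun i _ => Finset.sum_le_sum fun j _ => h i j
    _ = (Fintype.card ι : ℝ) * ∑ i, ∑ j, ∑ p, (M p i j) ^ 2 := by
        simp [Finset.mul_sum]
    _ = (Fintype.card ι : ℝ) * ∑ p, ∑ i, ∑ j, (M p i j) ^ 2 := by
        congr 1
        have h2 : ∀ i : Fin d, (∑ j, ∑ p, (M p i j) ^ 2 : ℝ) = ∑ p, ∑ j, (M p i j) ^ 2 :=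
          fun i => Finset.sum_comm
        simp_rw [h2]
        exact Finset.sum_comm

lemma integral_const_add_sq {Ω : Type*} [MeasurableSpace Ω] (P : Measure Ω)
    [IsProbabilityMeasure P] (c : ℝ) (Z : Ω → ℝ) (hZ : MemLp Z 2 P)
    (h0 : ∫ ω, Z ω ∂P = 0) :
    ∫ ω, (c + Z ω) ^ 2 ∂P = c ^ 2 + ∫ ω, (Z ω) ^ 2 ∂P := by
  have hZi : Integrable Z P := hZ.integrable one_le_two
  have hZ2 : Integrable (fun ω => (Z ω) ^ 2) P := by
    simpa [Pi.pow_apply] using hZ.integrable_sq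
  have hZ1 : Integrable (fun ω => 2 * c * Z ω) P := hZi.const_mul (2 * c)
  have hZ3 : Integrable (fun ω => 2 * c * Z ω + (Z ω) ^ 2) P := hZ1.add hZ2
  calc ∫ ω, (c + Z ω) ^ 2 ∂P
      = ∫ ω, (c ^ 2 + (2 * c * Z ω + (Z ω) ^ 2)) ∂P := by
        refine integral_congr_ae (Filter.Eventually.of_forall fun ω => ?_); ring
    _ = (∫ _ω, (c ^ 2 : ℝ) ∂P) + ∫ ω, (2 * c * Z ω + (Z ω) ^ 2) ∂P :=
        integral_add (integrable_const _) hZ3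
    _ = c ^ 2 + ((∫ ω, 2 * c * Z ω ∂P) + ∫ ω, (Z ω) ^ 2 ∂P) := by
        rw [integral_add hZ1 hZ2]; simp
    _ = c ^ 2 + ∫ ω, (Z ω) ^ 2 ∂P := by
        rw [integral_const_mul, h0]; ring

lemma sum_indep_sq_integral {Ω : Type*} [MeasurableSpace Ω] (P : Measure Ω)
    [IsProbabilityMeasure P] {ι : Type*} [Fintype ι] (Y : ι → Ω → ℝ) (μv : ι → ℝ)
    (hL2 : ∀ p, MemLp (Y p) 2 P)
    (hmean : ∀ p, ∫ ω, Y p ω ∂P = μv p)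
    (hpair : ∀ p q : ι, p ≠ q → ProbabilityTheory.IndepFun (Y p) (Y q) P) :
    ∫ ω, (∑ p, Y p ω - ∑ p, μv p) ^ 2 ∂P = ∑ p, ∫ ω, (Y p ω - μv p) ^ 2 ∂P := by
  have hW2 : MemLp (∑ p, Y p) 2 P := memLp_finset_sum' _ fun p _ => hL2 p
  have hXω : ∀ ω, (∑ p, Y p) ω = ∑ p, Y p ω := fun ω => by simp
  have hmeanX : ∫ ω, (∑ p, Y p) ω ∂P = ∑ p, μv p := by
    simp_rw [hXω]
    rw [integral_finset_sum _ fun p _ => (hL2 p).integrable one_le_two]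
    exact Finset.sum_congr rfl fun p _ => hmean p
  have hvar : ProbabilityTheory.variance (∑ p, Y p) P
      = ∫ ω, (∑ p, Y p ω - ∑ p, μv p) ^ 2 ∂P := by
    rw [ProbabilityTheory.variance_eq_integral hW2.aemeasurable]
    rw [hmeanX]
    simp_rw [hXω]
  have hvarp : ∀ p, ProbabilityTheory.variance (Y p) P = ∫ ω, (Y p ω - μv p) ^ 2 ∂P := by
    intro p
    rw [ProbabilityTheory.variance_eq_integral (hL2 p).aemeasurable]
    rw [hmean p]
  have hsum := ProbabilityTheory.IndepFun.variance_sum (μ := P) (X := Y) (s := Finset.univ)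
    (fun p _ => hL2 p) (fun p _ q _ hpq => hpair p q hpq)
  rw [← hvar, hsum]
  exact Finset.sum_congr rfl fun p _ => hvarp p

/-- Error bound for the averaged orthogonalized Muon update: under `L`-smoothness of the
clients' objectives, unbiased independent stochastic gradients with variance `σ_l²`, a
client-drift bound `U_r`, and a uniform lower bound `σ` on the singular values of the
normalized momentum matrices (so `‖U_i^{r,k}(I − S_i^{r,k})(V_i^{r,k})ᵀ‖_F² ≤ (1−σ)² d`),
`E‖∇f(x^r) − (1/(SK))∑_{i∈S^r}∑_k U_i^{r,k}(V_i^{r,k})ᵀ‖²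
  ≤ 2L²U_r + 2σ_l²/(SK) + 2(1−σ)² d`. -/
theorem stmt_19 {d S K : ℕ} (hS : 0 < S) (hK : 0 < K)
    {Ω : Type*} [MeasurableSpace Ω] (ℙ : Measure Ω) [IsProbabilityMeasure ℙ]
    (L σl σmin Ur : ℝ) (hL : 0 ≤ L) (hσl : 0 ≤ σl)
    -- global iterate `x^r`, local iterates `x_i^{r,k}`
    (x : Matrix (Fin d) (Fin d) ℝ)
    (xi : Fin S → Fin K → Matrix (Fin d) (Fin d) ℝ)
    -- `∇f_i(x_i^{r,k})`, `∇f_i(x^r)`, and `∇f(x^r)`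
    (gradfi : Fin S → Fin K → Matrix (Fin d) (Fin d) ℝ)
    (gradfix : Fin S → Matrix (Fin d) (Fin d) ℝ)
    (gradf : Matrix (Fin d) (Fin d) ℝ)
    -- stochastic gradients `g_i^{r,k}` and orthogonalized updates `U_i^{r,k}(V_i^{r,k})ᵀ`
    (G O : Fin S → Fin K → Ω → Matrix (Fin d) (Fin d) ℝ)
    (hGmeas : ∀ i k, Measurable (G i k))
    (hindep : ProbabilityTheory.iIndepFun (m := fun _ : Fin S × Fin K => matMeasurableSpace)
      (fun p : Fin S × Fin K => G p.1 p.2) ℙ)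
    (hGL2 : ∀ i k a b, MemLp (fun ω => G i k ω a b) 2 ℙ)
    (hUnbiased : ∀ i k a b, ∫ ω, G i k ω a b ∂ℙ = gradfi i k a b)
    (hVar : ∀ i k, ∫ ω, frobSq (G i k ω - gradfi i k) ∂ℙ ≤ σl ^ 2)
    (hSmooth : ∀ i k, frobSq (gradfi i k - gradfix i) ≤ L ^ 2 * frobSq (xi i k - x))
    (hgradf : gradf = (S : ℝ)⁻¹ • ∑ i, gradfix i)
    (hDrift : ((S : ℝ) * (K : ℝ))⁻¹ * ∑ i, ∑ k, frobSq (xi i k - x) ≤ Ur)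
    (hOrth : ∀ i k ω, frobSq (O i k ω - G i k ω) ≤ (1 - σmin) ^ 2 * (d : ℝ)) :
    ∫ ω, frobSq (gradf - ((S : ℝ) * (K : ℝ))⁻¹ • ∑ i, ∑ k, O i k ω) ∂ℙ
      ≤ 2 * L ^ 2 * Ur + 2 * σl ^ 2 / ((S : ℝ) * (K : ℝ))
        + 2 * (1 - σmin) ^ 2 * (d : ℝ) := by
  classical
  have hS' : (0 : ℝ) < (S : ℝ) := by exact_mod_cast hS
  have hK' : (0 : ℝ) < (K : ℝ) := by exact_mod_cast hK
  set n : ℝ := (S : ℝ) * (K : ℝ) with hn_def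
  have hn : 0 < n := mul_pos hS' hK'
  have hcard : ((Fintype.card (Fin S × Fin K) : ℕ) : ℝ) = n := by
    simp [hn_def]
  have hUr : 0 ≤ Ur :=
    le_trans (mul_nonneg (inv_nonneg.2 hn.le)
      (Finset.sum_nonneg fun i _ => Finset.sum_nonneg fun k _ => frobSq_nonneg _)) hDrift
  have hRHS : 0 ≤ 2 * L ^ 2 * Ur + 2 * σl ^ 2 / n + 2 * (1 - σmin) ^ 2 * (d : ℝ) := by
    have h1 : 0 ≤ 2 * L ^ 2 * Ur := by positivity
    have h2 : 0 ≤ 2 * σl ^ 2 / n := by positivity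
    have h3 : 0 ≤ 2 * (1 - σmin) ^ 2 * (d : ℝ) := by positivity
    linarith
  -- the deviation with respect to the stochastic gradients
  set D : Ω → Matrix (Fin d) (Fin d) ℝ :=
    fun ω => gradf - n⁻¹ • ∑ p : Fin S × Fin K, G p.1 p.2 ω with hD_def
  have hDab : ∀ a b ω, D ω a b
      = gradf a b - n⁻¹ * ∑ p : Fin S × Fin K, G p.1 p.2 ω a b := by
    intro a b ω
    simp [hD_def, Matrix.sub_apply, Matrix.smul_apply, Matrix.sum_apply, smul_eq_mul]
  have hDL2 : ∀ a b, MemLp (fun ω => D ω a b) 2 ℙ := by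
    intro a b
    have h1 : MemLp (fun ω => ∑ p : Fin S × Fin K, G p.1 p.2 ω a b) 2 ℙ :=
      memLp_finset_sum _ fun p _ => hGL2 p.1 p.2 a b
    have h2 : MemLp (fun ω => gradf a b
        - n⁻¹ * ∑ p : Fin S × Fin K, G p.1 p.2 ω a b) 2 ℙ :=
      (memLp_const _).sub (h1.const_mul _)
    have heq : (fun ω => D ω a b)
        = fun ω => gradf a b - n⁻¹ * ∑ p : Fin S × Fin K, G p.1 p.2 ω a b :=
      funext fun ω => hDab a b ω
    rw [heq]; exact h2
  have hfrobD : ∀ ω, frobSq (D ω) = ∑ a, ∑ b, (D ω a b) ^ 2 := fun ω => rfl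
  have hDint : Integrable (fun ω => frobSq (D ω)) ℙ := by
    simp_rw [hfrobD]
    refine integrable_finset_sum _ fun a _ => integrable_finset_sum _ fun b _ => ?_
    exact (hDL2 a b).integrable_sq
  -- pointwise bound via orthogonalization error
  have hpt : ∀ ω, frobSq (gradf - n⁻¹ • ∑ i, ∑ k, O i k ω)
      ≤ 2 * frobSq (D ω) + 2 * (1 - σmin) ^ 2 * (d : ℝ) := by
    intro ω
    have hsumO : (∑ i, ∑ k, O i k ω) = ∑ p : Fin S × Fin K, O p.1 p.2 ω := by
      rw [Fintype.sum_prod_type]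
    have hdecomp : gradf - n⁻¹ • ∑ i, ∑ k, O i k ω
        = D ω + n⁻¹ • ∑ p : Fin S × Fin K, (G p.1 p.2 ω - O p.1 p.2 ω) := by
      rw [hsumO, hD_def, Finset.sum_sub_distrib, smul_sub]
      beta_reduce
      abel
    have h4 : ∑ p : Fin S × Fin K, frobSq (G p.1 p.2 ω - O p.1 p.2 ω)
        ≤ n * ((1 - σmin) ^ 2 * (d : ℝ)) := by
      calc ∑ p : Fin S × Fin K, frobSq (G p.1 p.2 ω - O p.1 p.2 ω)
          ≤ ∑ _p : Fin S × Fin K, (1 - σmin) ^ 2 * (d : ℝ) :=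
            Finset.sum_le_sum fun p _ => by
              rw [frobSq_sub_comm]; exact hOrth p.1 p.2 ω
        _ = n * ((1 - σmin) ^ 2 * (d : ℝ)) := by
            rw [Finset.sum_const, Finset.card_univ, nsmul_eq_mul, hcard]
    have h2 : frobSq (n⁻¹ • ∑ p : Fin S × Fin K, (G p.1 p.2 ω - O p.1 p.2 ω))
        ≤ (1 - σmin) ^ 2 * (d : ℝ) := by
      rw [frobSq_smul]
      have h3 := frobSq_sum_le (fun p : Fin S × Fin K => G p.1 p.2 ω - O p.1 p.2 ω)
      rw [hcard] at h3
      have h5 : frobSq (∑ p : Fin S × Fin K, (G p.1 p.2 ω - O p.1 p.2 ω))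
          ≤ n * (n * ((1 - σmin) ^ 2 * (d : ℝ))) :=
        le_trans h3 (mul_le_mul_of_nonneg_left h4 hn.le)
      have h6 : (n⁻¹) ^ 2 * (n * (n * ((1 - σmin) ^ 2 * (d : ℝ))))
          = (1 - σmin) ^ 2 * (d : ℝ) := by
        field_simp
      calc (n⁻¹) ^ 2 * frobSq (∑ p : Fin S × Fin K, (G p.1 p.2 ω - O p.1 p.2 ω))
          ≤ (n⁻¹) ^ 2 * (n * (n * ((1 - σmin) ^ 2 * (d : ℝ)))) :=
            mul_le_mul_of_nonneg_left h5 (by positivity)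
        _ = (1 - σmin) ^ 2 * (d : ℝ) := h6
    calc frobSq (gradf - n⁻¹ • ∑ i, ∑ k, O i k ω)
        = frobSq (D ω + n⁻¹ • ∑ p : Fin S × Fin K, (G p.1 p.2 ω - O p.1 p.2 ω)) := by
          rw [hdecomp]
      _ ≤ 2 * frobSq (D ω)
          + 2 * frobSq (n⁻¹ • ∑ p : Fin S × Fin K, (G p.1 p.2 ω - O p.1 p.2 ω)) :=
          frobSq_add_le _ _
      _ ≤ 2 * frobSq (D ω) + 2 * (1 - σmin) ^ 2 * (d : ℝ) := by nlinarith [h2]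
  -- core: second moment of D
  have heval : ∀ a b : Fin d, Measurable (fun M : Matrix (Fin d) (Fin d) ℝ => M a b) :=
    fun a b => (measurable_pi_apply b).comp (measurable_pi_apply a)
  have hcore : ∫ ω, frobSq (D ω) ∂ℙ ≤ L ^ 2 * Ur + σl ^ 2 / n := by
    -- per-entry decomposition
    have hentry : ∀ a b : Fin d, ∫ ω, (D ω a b) ^ 2 ∂ℙ
        = (gradf a b - n⁻¹ * ∑ p : Fin S × Fin K, gradfi p.1 p.2 a b) ^ 2
          + (n⁻¹) ^ 2 * ∑ p : Fin S × Fin K,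
              ∫ ω, (G p.1 p.2 ω a b - gradfi p.1 p.2 a b) ^ 2 ∂ℙ := by
      intro a b
      set c : ℝ := gradf a b - n⁻¹ * ∑ p : Fin S × Fin K, gradfi p.1 p.2 a b with hc_def
      set Z : Ω → ℝ := fun ω => n⁻¹ * (∑ p : Fin S × Fin K, gradfi p.1 p.2 a b
          - ∑ p : Fin S × Fin K, G p.1 p.2 ω a b) with hZ_def
      have hsumG2 : MemLp (fun ω => ∑ p : Fin S × Fin K, G p.1 p.2 ω a b) 2 ℙ :=
        memLp_finset_sum _ fun p _ => hGL2 p.1 p.2 a b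
      have hZ2 : MemLp Z 2 ℙ := ((memLp_const _).sub hsumG2).const_mul _
      have hsumGint : Integrable (fun ω => ∑ p : Fin S × Fin K, G p.1 p.2 ω a b) ℙ :=
        hsumG2.integrable one_le_two
      have hmeanG : ∫ ω, (∑ p : Fin S × Fin K, G p.1 p.2 ω a b) ∂ℙ
          = ∑ p : Fin S × Fin K, gradfi p.1 p.2 a b := by
        rw [integral_finset_sum _ fun p _ => (hGL2 p.1 p.2 a b).integrable one_le_two]
        exact Finset.sum_congr rfl fun p _ => hUnbiased p.1 p.2 a b
      have hZ0 : ∫ ω, Z ω ∂ℙ = 0 := by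
        rw [hZ_def]
        simp only
        rw [integral_const_mul,
          integral_sub (integrable_const _) hsumGint, integral_const, hmeanG]
        simp
      have hDZ : ∀ ω, D ω a b = c + Z ω := by
        intro ω
        rw [hDab a b ω, hc_def, hZ_def]
        ring
      have h1 : ∫ ω, (D ω a b) ^ 2 ∂ℙ = c ^ 2 + ∫ ω, (Z ω) ^ 2 ∂ℙ := by
        simp_rw [hDZ]
        exact integral_const_add_sq ℙ c Z hZ2 hZ0
      -- compute ∫ Z²
      have hZsq : ∀ ω, (Z ω) ^ 2 = (n⁻¹) ^ 2
          * (∑ p : Fin S × Fin K, G p.1 p.2 ω a b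
              - ∑ p : Fin S × Fin K, gradfi p.1 p.2 a b) ^ 2 := by
        intro ω; rw [hZ_def]; ring
      have hpair : ∀ p q : Fin S × Fin K, p ≠ q →
          ProbabilityTheory.IndepFun (fun ω => G p.1 p.2 ω a b)
            (fun ω => G q.1 q.2 ω a b) ℙ := by
        intro p q hpq
        exact (hindep.indepFun hpq).comp (heval a b) (heval a b)
      have hindsum := sum_indep_sq_integral ℙ
        (fun p : Fin S × Fin K => fun ω => G p.1 p.2 ω a b)
        (fun p : Fin S × Fin K => gradfi p.1 p.2 a b)
        (fun p => hGL2 p.1 p.2 a b) (fun p => hUnbiased p.1 p.2 a b) hpair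
      have h2 : ∫ ω, (Z ω) ^ 2 ∂ℙ = (n⁻¹) ^ 2 * ∑ p : Fin S × Fin K,
          ∫ ω, (G p.1 p.2 ω a b - gradfi p.1 p.2 a b) ^ 2 ∂ℙ := by
        simp_rw [hZsq]
        rw [integral_const_mul, hindsum]
      rw [h1, h2]
    -- sum the entries
    have hswap : ∫ ω, frobSq (D ω) ∂ℙ = ∑ a, ∑ b, ∫ ω, (D ω a b) ^ 2 ∂ℙ := by
      simp_rw [hfrobD]
      rw [integral_finset_sum _ fun a _ =>
        integrable_finset_sum _ fun b _ => (hDL2 a b).integrable_sq]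
      exact Finset.sum_congr rfl fun a _ =>
        integral_finset_sum _ fun b _ => (hDL2 a b).integrable_sq
    rw [hswap]
    simp_rw [hentry]
    rw [Finset.sum_congr rfl fun a _ => Finset.sum_add_distrib]
    rw [Finset.sum_add_distrib]
    -- first term: drift
    have hterm1 : (∑ a, ∑ b, (gradf a b
        - n⁻¹ * ∑ p : Fin S × Fin K, gradfi p.1 p.2 a b) ^ 2) ≤ L ^ 2 * Ur := by
      have hmateq : ∀ a b : Fin d, gradf a b
          - n⁻¹ * ∑ p : Fin S × Fin K, gradfi p.1 p.2 a b
          = (gradf - n⁻¹ • ∑ p : Fin S × Fin K, gradfi p.1 p.2) a b := by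
        intro a b
        simp [Matrix.sub_apply, Matrix.smul_apply, Matrix.sum_apply, smul_eq_mul]
      have hmat : gradf - n⁻¹ • ∑ p : Fin S × Fin K, gradfi p.1 p.2
          = n⁻¹ • ∑ p : Fin S × Fin K, (gradfix p.1 - gradfi p.1 p.2) := by
        have h1 : (∑ p : Fin S × Fin K, gradfix p.1) = (K : ℝ) • ∑ i, gradfix i := by
          rw [Fintype.sum_prod_type]
          simp only [Finset.sum_const, Finset.card_univ, Fintype.card_fin]
          rw [Finset.smul_sum]
          exact Finset.sum_congr rfl fun i _ => (Nat.cast_smul_eq_nsmul ℝ K _).symm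
        rw [Finset.sum_sub_distrib, smul_sub, h1, smul_smul, hgradf]
        congr 2
        rw [hn_def]
        field_simp
      have hbound : frobSq (n⁻¹ • ∑ p : Fin S × Fin K, (gradfix p.1 - gradfi p.1 p.2))
          ≤ L ^ 2 * Ur := by
        rw [frobSq_smul]
        have h3 := frobSq_sum_le (fun p : Fin S × Fin K => gradfix p.1 - gradfi p.1 p.2)
        rw [hcard] at h3
        have h4 : ∑ p : Fin S × Fin K, frobSq (gradfix p.1 - gradfi p.1 p.2)
            ≤ L ^ 2 * ∑ p : Fin S × Fin K, frobSq (xi p.1 p.2 - x) := by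
          rw [Finset.mul_sum]
          refine Finset.sum_le_sum fun p _ => ?_
          rw [frobSq_sub_comm]
          exact hSmooth p.1 p.2
        have h5 : n⁻¹ * ∑ p : Fin S × Fin K, frobSq (xi p.1 p.2 - x) ≤ Ur := by
          have : (∑ p : Fin S × Fin K, frobSq (xi p.1 p.2 - x))
              = ∑ i, ∑ k, frobSq (xi i k - x) := by
            rw [Fintype.sum_prod_type]
          rw [this]
          exact hDrift
        calc (n⁻¹) ^ 2 * frobSq (∑ p : Fin S × Fin K, (gradfix p.1 - gradfi p.1 p.2))
            ≤ (n⁻¹) ^ 2 * (n * (L ^ 2 * ∑ p : Fin S × Fin K, frobSq (xi p.1 p.2 - x))) := by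
              refine mul_le_mul_of_nonneg_left ?_ (by positivity)
              exact le_trans h3 (mul_le_mul_of_nonneg_left h4 hn.le)
          _ = L ^ 2 * (n⁻¹ * ∑ p : Fin S × Fin K, frobSq (xi p.1 p.2 - x)) := by
              field_simp
          _ ≤ L ^ 2 * Ur := mul_le_mul_of_nonneg_left h5 (by positivity)
      calc (∑ a, ∑ b, (gradf a b - n⁻¹ * ∑ p : Fin S × Fin K, gradfi p.1 p.2 a b) ^ 2)
          = frobSq (gradf - n⁻¹ • ∑ p : Fin S × Fin K, gradfi p.1 p.2) := by
            unfold frobSq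
            exact Finset.sum_congr rfl fun a _ => Finset.sum_congr rfl fun b _ => by
              rw [hmateq a b]
        _ = frobSq (n⁻¹ • ∑ p : Fin S × Fin K, (gradfix p.1 - gradfi p.1 p.2)) := by
            rw [hmat]
        _ ≤ L ^ 2 * Ur := hbound
    -- second term: noise
    have hterm2 : (∑ a, ∑ b, (n⁻¹) ^ 2 * ∑ p : Fin S × Fin K,
        ∫ ω, (G p.1 p.2 ω a b - gradfi p.1 p.2 a b) ^ 2 ∂ℙ) ≤ σl ^ 2 / n := by
      have hint : ∀ (p : Fin S × Fin K) (a b : Fin d),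
          Integrable (fun ω => (G p.1 p.2 ω a b - gradfi p.1 p.2 a b) ^ 2) ℙ :=
        fun p a b => ((hGL2 p.1 p.2 a b).sub (memLp_const _)).integrable_sq
      have hswap2 : (∑ a, ∑ b, ∑ p : Fin S × Fin K,
          ∫ ω, (G p.1 p.2 ω a b - gradfi p.1 p.2 a b) ^ 2 ∂ℙ)
          = ∑ p : Fin S × Fin K, ∫ ω, frobSq (G p.1 p.2 ω - gradfi p.1 p.2) ∂ℙ := by
        have e1 : ∀ a : Fin d, (∑ b, ∑ p : Fin S × Fin K,
            ∫ ω, (G p.1 p.2 ω a b - gradfi p.1 p.2 a b) ^ 2 ∂ℙ)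
            = ∑ p : Fin S × Fin K, ∑ b,
              ∫ ω, (G p.1 p.2 ω a b - gradfi p.1 p.2 a b) ^ 2 ∂ℙ :=
          fun a => Finset.sum_comm
        simp_rw [e1]
        rw [Finset.sum_comm]
        refine Finset.sum_congr rfl fun p _ => ?_
        have e2 : ∀ ω, frobSq (G p.1 p.2 ω - gradfi p.1 p.2)
            = ∑ a, ∑ b, (G p.1 p.2 ω a b - gradfi p.1 p.2 a b) ^ 2 := by
          intro ω
          unfold frobSq
          exact Finset.sum_congr rfl fun a _ => Finset.sum_congr rfl fun b _ => by
            rw [Matrix.sub_apply]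
        simp_rw [e2]
        rw [integral_finset_sum _ fun a _ => integrable_finset_sum _ fun b _ => hint p a b]
        exact Finset.sum_congr rfl fun a _ =>
          (integral_finset_sum _ fun b _ => hint p a b).symm
      have hsb : (∑ p : Fin S × Fin K, ∫ ω, frobSq (G p.1 p.2 ω - gradfi p.1 p.2) ∂ℙ)
          ≤ n * σl ^ 2 := by
        calc (∑ p : Fin S × Fin K, ∫ ω, frobSq (G p.1 p.2 ω - gradfi p.1 p.2) ∂ℙ)
            ≤ ∑ _p : Fin S × Fin K, σl ^ 2 :=
              Finset.sum_le_sum fun p _ => hVar p.1 p.2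
          _ = n * σl ^ 2 := by
              rw [Finset.sum_const, Finset.card_univ, nsmul_eq_mul, hcard]
      calc (∑ a, ∑ b, (n⁻¹) ^ 2 * ∑ p : Fin S × Fin K,
            ∫ ω, (G p.1 p.2 ω a b - gradfi p.1 p.2 a b) ^ 2 ∂ℙ)
          = (n⁻¹) ^ 2 * ∑ a, ∑ b, ∑ p : Fin S × Fin K,
              ∫ ω, (G p.1 p.2 ω a b - gradfi p.1 p.2 a b) ^ 2 ∂ℙ := by
            simp [Finset.mul_sum]
        _ = (n⁻¹) ^ 2 * ∑ p : Fin S × Fin K,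
              ∫ ω, frobSq (G p.1 p.2 ω - gradfi p.1 p.2) ∂ℙ := by rw [hswap2]
        _ ≤ (n⁻¹) ^ 2 * (n * σl ^ 2) :=
            mul_le_mul_of_nonneg_left hsb (by positivity)
        _ = σl ^ 2 / n := by field_simp
    linarith [hterm1, hterm2]
  -- put things together
  by_cases hInt : Integrable (fun ω => frobSq (gradf - n⁻¹ • ∑ i, ∑ k, O i k ω)) ℙ
  · have hRint : Integrable
        (fun ω => 2 * frobSq (D ω) + 2 * (1 - σmin) ^ 2 * (d : ℝ)) ℙ :=
      (hDint.const_mul 2).add (integrable_const _)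
    calc ∫ ω, frobSq (gradf - n⁻¹ • ∑ i, ∑ k, O i k ω) ∂ℙ
        ≤ ∫ ω, (2 * frobSq (D ω) + 2 * (1 - σmin) ^ 2 * (d : ℝ)) ∂ℙ :=
          integral_mono hInt hRint hpt
      _ = 2 * (∫ ω, frobSq (D ω) ∂ℙ) + 2 * (1 - σmin) ^ 2 * (d : ℝ) := by
          rw [integral_add (hDint.const_mul 2) (integrable_const _),
            integral_const_mul, integral_const]
          simp
      _ ≤ 2 * (L ^ 2 * Ur + σl ^ 2 / n) + 2 * (1 - σmin) ^ 2 * (d : ℝ) := by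
          have := hcore; linarith
      _ = 2 * L ^ 2 * Ur + 2 * σl ^ 2 / n + 2 * (1 - σmin) ^ 2 * (d : ℝ) := by ring
  · rw [integral_undef hInt]
    exact hRHS
end
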